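/- Let θ = ({X_t}, {h_t}) be a partial action of a group G on a set X, and let ∼ be the equivalence relation on G × X given by (r,x) ∼ (s,y) ⟺ x ∈ X_{r⁻¹s} and h_{s⁻¹r}(x) = y. Then for each s ∈ G, the map (t,x) ↦ (st,x) on G × X descends to a well-defined bijection h^e_s of the quotient X^e = (G × X)/∼, and s ↦ h^e_s is a group action of G on X^e. -/
import Mathlib


/-- A partial action of a group `G` on a set `X`. -/
structure PartialAction (G : Type*) [Group G] (X : Type*) where
  dom : G → Set X
  h : G → X → X
  dom_one : dom 1 = Set.univ
  h_one : ∀ x, h 1 x = x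
  bijOn : ∀ t, Set.BijOn (h t) (dom t⁻¹) (dom t)
  image_inter : ∀ t s, h t '' (dom t⁻¹ ∩ dom s) = dom t ∩ dom (t * s)
  hcomp : ∀ t s x, x ∈ dom s⁻¹ ∩ dom (s⁻¹ * t⁻¹) → h t (h s x) = h (t * s) x

/-- The relation `(r,x) ∼ (s,y) ↔ x ∈ X_{r⁻¹s} ∧ h_{s⁻¹r}(x) = y`. -/
def PartialAction.rel {G X : Type*} [Group G] (θ : PartialAction G X) :
    G × X → G × X → Prop :=
  fun p q => p.2 ∈ θ.dom (p.1⁻¹ * q.1) ∧ θ.h (q.1⁻¹ * p.1) p.2 = q.2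

/-- For each `s ∈ G`, the map `(t,x) ↦ (st,x)` descends to a well-defined bijection
`h^e_s` of the envelope space `X^e = (G × X)/∼`, and `s ↦ h^e_s` is an action of `G`. -/
lemma rel_map {G X : Type*} [Group G] (θ : PartialAction G X) (s : G) :
    ∀ p q : G × X, θ.rel p q → θ.rel ((s * p.1, p.2)) ((s * q.1, q.2)) := by
  rintro ⟨t, x⟩ ⟨t', x'⟩ ⟨h1, h2⟩
  exact ⟨by simpa [mul_assoc] using h1, by simpa [mul_assoc] using h2⟩

theorem envelope_action_exists {G X : Type*} [Group G] (θ : PartialAction G X)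
    (heq : Equivalence θ.rel) :
    ∃ he : G → Quotient (Setoid.mk θ.rel heq) → Quotient (Setoid.mk θ.rel heq),
      (∀ s t x, he s (Quotient.mk (Setoid.mk θ.rel heq) (t, x)) =
          Quotient.mk (Setoid.mk θ.rel heq) (s * t, x)) ∧
      (∀ s, Function.Bijective (he s)) ∧
      (∀ q, he 1 q = q) ∧
      (∀ s s' q, he (s * s') q = he s (he s' q)) := by
  refine ⟨fun s => Quotient.map (sa := Setoid.mk θ.rel heq) (sb := Setoid.mk θ.rel heq)
      (fun p => (s * p.1, p.2)) (rel_map θ s), ?_, ?_, ?_, ?_⟩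
  · intro s t x; rfl
  · intro s
    constructor
    · intro q q' h
      induction q using Quotient.ind
      induction q' using Quotient.ind
      have := congrArg (Quotient.map (sa := Setoid.mk θ.rel heq) (sb := Setoid.mk θ.rel heq)
        (fun p : G × X => (s⁻¹ * p.1, p.2)) (rel_map θ s⁻¹)) h
      simpa [Quotient.map_mk, mul_assoc] using this
    · intro q
      induction q using Quotient.ind
      rename_i p
      exact ⟨Quotient.mk _ (s⁻¹ * p.1, p.2), by simp [Quotient.map_mk, mul_assoc]⟩
  · intro q
    induction q using Quotient.ind
    simp [Quotient.map_mk]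
  · intro s s' q
    induction q using Quotient.ind
    simp [Quotient.map_mk, mul_assoc]
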